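/- Suppose κ is the least measurable limit of supercompact cardinals (that is, κ is measurable, the supercompact cardinals below κ are unbounded in κ, and no cardinal δ < κ has both of these properties) and 2^κ = κ⁺. Then κ is strongly compact, κ is not κ⁺-supercompact, and moreover κ is not λ-supercompact for any λ ≥ κ⁺; in particular, κ is a non-supercompact strongly compact cardinal. -/

import Mathlib

open Cardinal Set

/-- `𝒫_κ(λ)`: the collection of subsets of `λ` (identified with its set of
ordinals `{α | α < ord λ}`) of cardinality less than `κ`. -/
def SmallSet (κ lam : Cardinal.{0}) : Set (Set Ordinal.{0}) :=
  {x | x ⊆ Set.Iio lam.ord ∧ #x < Cardinal.lift.{1} κ}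

/-- An ultrafilter is `κ`-complete if the intersection of any family of fewer
than `κ` of its members again belongs to it. -/
def KComplete {X : Type*} (κ : Cardinal.{0}) (U : Ultrafilter X) : Prop :=
  ∀ (ι : Type) (A : ι → Set X), #ι < κ → (∀ i, A i ∈ U) → (⋂ i, A i) ∈ U

/-- An ultrafilter is nonprincipal if it contains no singleton. -/
def Nonprincipal {X : Type*} (U : Ultrafilter X) : Prop :=
  ∀ a : X, {a} ∉ U

/-- A cardinal `κ` is measurable if it is uncountable and carries a
`κ`-complete nonprincipal ultrafilter. -/
def IsMeasurableCard (κ : Cardinal.{0}) : Prop :=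
  ℵ₀ < κ ∧ ∃ U : Ultrafilter ↥(Set.Iio κ.ord), KComplete κ U ∧ Nonprincipal U

/-- An ultrafilter on `𝒫_κ(λ)` is fine if for every `α < λ` the set
`{x | α ∈ x}` belongs to it. -/
def Fine (κ lam : Cardinal.{0}) (U : Ultrafilter ↥(SmallSet κ lam)) : Prop :=
  ∀ α < lam.ord, {x : ↥(SmallSet κ lam) | α ∈ (x : Set Ordinal)} ∈ U

/-- `κ` is `λ`-strongly compact: there is a `κ`-complete fine ultrafilter on `𝒫_κ(λ)`. -/
def IsStronglyCompactTo (κ lam : Cardinal.{0}) : Prop :=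
  ∃ U : Ultrafilter ↥(SmallSet κ lam), KComplete κ U ∧ Fine κ lam U

/-- `κ` is strongly compact: `λ`-strongly compact for every `λ ≥ κ`. -/
def IsStronglyCompactCard (κ : Cardinal.{0}) : Prop :=
  ∀ lam, κ ≤ lam → IsStronglyCompactTo κ lam

/-- An ultrafilter on `𝒫_κ(λ)` is normal if every function `f : 𝒫_κ(λ) → λ`
with `f x ∈ x` almost everywhere is constant on a set in the ultrafilter. -/
def NormalUF (κ lam : Cardinal.{0}) (U : Ultrafilter ↥(SmallSet κ lam)) : Prop :=
  ∀ f : ↥(SmallSet κ lam) → Ordinal, (∀ x, f x < lam.ord) →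
    {x : ↥(SmallSet κ lam) | f x ∈ (x : Set Ordinal)} ∈ U →
    ∃ γ : Ordinal, {x : ↥(SmallSet κ lam) | f x = γ} ∈ U

/-- `κ` is `λ`-supercompact: there is a `κ`-complete normal fine ultrafilter on `𝒫_κ(λ)`. -/
def IsSupercompactTo (κ lam : Cardinal.{0}) : Prop :=
  ∃ U : Ultrafilter ↥(SmallSet κ lam), KComplete κ U ∧ NormalUF κ lam U ∧ Fine κ lam U

/-- `κ` is supercompact: `λ`-supercompact for every `λ ≥ κ`. -/
def IsSupercompactCard (κ : Cardinal.{0}) : Prop :=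
  ∀ lam, κ ≤ lam → IsSupercompactTo κ lam

lemma comp_iInter {X : Type*} {c : Cardinal.{0}} {U : Ultrafilter X}
    (hU : KComplete c U) (o : Ordinal.{0}) (ho : o.card < c)
    (A : Ordinal → Set X) (hA : ∀ i < o, A i ∈ U) :
    {x | ∀ i < o, x ∈ A i} ∈ U := by
  have h := hU o.ToType (fun j => A (((Ordinal.ToType.mk (o := o))).symm j).1)
    (by rw [Cardinal.mk_toType]; exact ho)
    (fun j => hA _ (((Ordinal.ToType.mk (o := o))).symm j).2)
  have heq : (⋂ j, A (((Ordinal.ToType.mk (o := o))).symm j).1) = {x | ∀ i < o, x ∈ A i} := by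
    ext x
    simp only [mem_iInter, mem_setOf_eq]
    constructor
    · intro hx i hi
      have := hx (((Ordinal.ToType.mk (o := o))) ⟨i, hi⟩)
      simpa using this
    · intro hx j; exact hx _ (((Ordinal.ToType.mk (o := o))).symm j).2
  rwa [heq] at h

/-- Menas part 1: a measurable limit of supercompacts is strongly compact. -/
lemma part1 (κ : Cardinal.{0}) (hmeas : IsMeasurableCard κ)
    (hub : ∀ α < κ, ∃ δ : Cardinal.{0}, α < δ ∧ δ < κ ∧ IsSupercompactCard δ) :
    IsStronglyCompactCard κ := by
  obtain ⟨hκ, W, hWc, hWnp⟩ := hmeas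
  intro lam hlam
  choose ρ hρ1 hρ2 hρ3 using fun β : ↥(Set.Iio κ.ord) => hub β.1.card (Cardinal.lt_ord.1 β.2)
  choose Uu hc hrest using fun β : ↥(Set.Iio κ.ord) =>
    hρ3 β lam (le_trans (le_of_lt (hρ2 β)) hlam)
  have hfine : ∀ β, Fine (ρ β) lam (Uu β) := fun β => (hrest β).2
  -- inclusion of small sets
  have hincl : ∀ β : ↥(Set.Iio κ.ord), ∀ y : ↥(SmallSet (ρ β) lam), (y : Set Ordinal) ∈ SmallSet κ lam := by
    intro β y
    exact ⟨y.2.1, lt_of_lt_of_le y.2.2 (Cardinal.lift_le.2 (le_of_lt (hρ2 β)))⟩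
  set incl : ∀ β : ↥(Set.Iio κ.ord), ↥(SmallSet (ρ β) lam) → ↥(SmallSet κ lam) :=
    fun β y => ⟨y.1, hincl β y⟩ with hincldef
  set V : ↥(Set.Iio κ.ord) → Ultrafilter ↥(SmallSet κ lam) :=
    fun β => Ultrafilter.map (incl β) (Uu β) with hVdef
  refine ⟨W.bind V, ?_, ?_⟩
  · -- κ-complete
    intro ι A hι hA
    have hmem : ∀ s : Set ↥(SmallSet κ lam), s ∈ W.bind V ↔ {β | s ∈ V β} ∈ W := fun s => Iff.rfl
    rw [hmem]
    have hT : (⋂ i, {β | A i ∈ V β}) ∈ W := hWc ι _ hι (fun i => (hmem (A i)).1 (hA i))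
    have hS : {β : ↥(Set.Iio κ.ord) | (#ι).ord ≤ β.1} ∈ W := by
      have h1 : {β : ↥(Set.Iio κ.ord) | ∀ i < (#ι).ord, (β : ↥(Set.Iio κ.ord)) ∈ {b : ↥(Set.Iio κ.ord) | b.1 ≠ i}} ∈ W := by
        refine comp_iInter hWc (#ι).ord (by rwa [Cardinal.card_ord]) _ ?_
        intro i hi
        by_cases hik : i < κ.ord
        · have : {b : ↥(Set.Iio κ.ord) | b.1 ≠ i} = ({⟨i, hik⟩} : Set ↥(Set.Iio κ.ord))ᶜ := by
            ext b; simp [Subtype.ext_iff]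
          rw [this]
          exact (Ultrafilter.compl_mem_iff_notMem).2 (hWnp _)
        · have : {b : ↥(Set.Iio κ.ord) | b.1 ≠ i} = Set.univ := by
            ext b; simp only [mem_setOf_eq, Set.mem_univ, iff_true]
            intro hbi; exact hik (hbi ▸ b.2)
          rw [this]; exact Filter.univ_mem
      refine Filter.mem_of_superset h1 ?_
      intro b hb
      simp only [mem_setOf_eq] at hb ⊢
      by_contra hlt
      exact hb b.1 (lt_of_not_ge hlt) rfl
    refine Filter.mem_of_superset (Filter.inter_mem hS hT) ?_
    rintro β ⟨hβS, hβT⟩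
    simp only [mem_iInter, mem_setOf_eq] at hβT ⊢
    have hcompβ : #ι < ρ β := by
      have h1 : #ι ≤ β.1.card := by
        have := Ordinal.card_le_card hβS
        rwa [Cardinal.card_ord] at this
      exact lt_of_le_of_lt h1 (hρ1 β)
    have : ⋂ i, (incl β) ⁻¹' (A i) ∈ Uu β :=
      hc β ι _ hcompβ (fun i => Ultrafilter.mem_map.1 (hβT i))
    rw [Ultrafilter.mem_map, Set.preimage_iInter]
    exact this
  · -- fine
    intro α hα
    have hmem : ∀ s : Set ↥(SmallSet κ lam), s ∈ W.bind V ↔ {β | s ∈ V β} ∈ W := fun s => Iff.rfl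
    rw [hmem]
    have : {β : ↥(Set.Iio κ.ord) | {x : ↥(SmallSet κ lam) | α ∈ (x : Set Ordinal)} ∈ V β} = Set.univ := by
      ext β
      simp only [mem_setOf_eq, Set.mem_univ, iff_true]
      rw [Ultrafilter.mem_map]
      exact hfine β α hα
    rw [this]; exact Filter.univ_mem

section Aux

variable {κ lam : Cardinal.{0}}

/-- The "diagonal" ordinal attached to `x`: the least ordinal not in `x ∩ Iio κ.ord`. -/
noncomputable def dlt (κ : Cardinal.{0}) {lam : Cardinal.{0}} (x : ↥(SmallSet κ lam)) : Ordinal :=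
  sInf {β | ¬(β ∈ (x : Set Ordinal) ∧ β < κ.ord)}

lemma dlt_not_mem (x : ↥(SmallSet κ lam)) : ¬(dlt κ x ∈ (x : Set Ordinal) ∧ dlt κ x < κ.ord) := by
  have : dlt κ x ∈ {β : Ordinal | ¬(β ∈ (x : Set Ordinal) ∧ β < κ.ord)} :=
    csInf_mem ⟨κ.ord, fun h => absurd h.2 (lt_irrefl _)⟩
  exact this

lemma dlt_le (x : ↥(SmallSet κ lam)) : dlt κ x ≤ κ.ord :=
  csInf_le' (show κ.ord ∈ {β : Ordinal | ¬(β ∈ (x : Set Ordinal) ∧ β < κ.ord)} from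
    fun h => absurd h.2 (lt_irrefl _))

lemma lt_dlt {x : ↥(SmallSet κ lam)} {β : Ordinal} (hβ : β < dlt κ x) :
    β ∈ (x : Set Ordinal) ∧ β < κ.ord := by
  by_contra h
  have hmem : β ∈ {β : Ordinal | ¬(β ∈ (x : Set Ordinal) ∧ β < κ.ord)} := h
  exact absurd (csInf_le' hmem) (not_le.2 hβ)

variable {U : Ultrafilter ↥(SmallSet κ lam)}

lemma lam_ord_pos (hκ : ℵ₀ < κ) (hκlam : κ ≤ lam) : (0 : Ordinal) < lam.ord := by
  rw [Cardinal.lt_ord, Ordinal.card_zero]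
  exact lt_of_lt_of_le (lt_of_le_of_lt zero_le hκ) hκlam

lemma kord_le_lord (hκlam : κ ≤ lam) : κ.ord ≤ lam.ord := Cardinal.ord_le_ord.2 hκlam

/-- a.e. intersection of fine sets below an ordinal. -/
lemma aeIio (hUc : KComplete κ U) (hUf : Fine κ lam U) {o : Ordinal}
    (ho1 : o ≤ lam.ord) (ho2 : o.card < κ) :
    {x : ↥(SmallSet κ lam) | ∀ β < o, β ∈ (x : Set Ordinal)} ∈ U := by
  exact comp_iInter hUc o ho2 (fun β => {x | β ∈ (x : Set Ordinal)})
    (fun β hβ => hUf β (lt_of_lt_of_le hβ ho1))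

/-- Pressing-down lemma. -/
lemma press (hκ : ℵ₀ < κ) (hκlam : κ ≤ lam) (hUn : NormalUF κ lam U)
    (S : Set ↥(SmallSet κ lam)) (g : ↥(SmallSet κ lam) → Ordinal)
    (hS : S ∈ U) (hg : ∀ x ∈ S, g x ∈ (x : Set Ordinal)) :
    ∃ γ, {x | x ∈ S ∧ g x = γ} ∈ U := by
  classical
  set f : ↥(SmallSet κ lam) → Ordinal := fun x => if x ∈ S then g x else 0 with hf
  have hflt : ∀ x, f x < lam.ord := by
    intro x
    by_cases hx : x ∈ S
    · simp only [hf, if_pos hx]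
      exact x.2.1 (hg x hx)
    · simp only [hf, if_neg hx]
      exact lam_ord_pos hκ hκlam
  have hfmem : {x : ↥(SmallSet κ lam) | f x ∈ (x : Set Ordinal)} ∈ U := by
    refine Filter.mem_of_superset hS ?_
    intro x hx
    simp only [mem_setOf_eq, hf, if_pos hx]
    exact hg x hx
  obtain ⟨γ, hγ⟩ := hUn f hflt hfmem
  refine ⟨γ, Filter.mem_of_superset (Filter.inter_mem hS hγ) ?_⟩
  rintro x ⟨hx1, hx2⟩
  simp only [mem_setOf_eq, hf, if_pos hx1] at hx2
  exact ⟨hx1, hx2⟩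

/-- The set of "downward closed" `x`. -/
def Gdc (κ lam : Cardinal.{0}) : Set ↥(SmallSet κ lam) :=
  {x | ∀ β ∈ (x : Set Ordinal), β < κ.ord → ∀ α < β, α ∈ (x : Set Ordinal)}

lemma Gdc_mem (hκ : ℵ₀ < κ) (hκlam : κ ≤ lam) (hUc : KComplete κ U)
    (hUn : NormalUF κ lam U) (hUf : Fine κ lam U) : Gdc κ lam ∈ U := by
  classical
  by_contra hcon
  have hN : (Gdc κ lam)ᶜ ∈ U := (Ultrafilter.compl_mem_iff_notMem).2 hcon
  have hbad : ∀ x ∈ (Gdc κ lam)ᶜ, ∃ β, β ∈ (x : Set Ordinal) ∧ β < κ.ord ∧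
      ∃ α < β, α ∉ (x : Set Ordinal) := by
    intro x hx
    simp only [Gdc, mem_compl_iff, mem_setOf_eq] at hx
    push_neg at hx
    obtain ⟨β, h1, h2, α, h3, h4⟩ := hx
    exact ⟨β, h1, h2, α, h3, h4⟩
  set g : ↥(SmallSet κ lam) → Ordinal := fun x =>
    if hx : x ∈ (Gdc κ lam)ᶜ then (hbad x hx).choose else 0 with hgdef
  have hgspec : ∀ x ∈ (Gdc κ lam)ᶜ, g x ∈ (x : Set Ordinal) ∧ g x < κ.ord ∧
      ∃ α < g x, α ∉ (x : Set Ordinal) := by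
    intro x hx
    simp only [hgdef, dif_pos hx]
    exact (hbad x hx).choose_spec
  obtain ⟨β₀, hT⟩ := press hκ hκlam hUn _ g hN (fun x hx => (hgspec x hx).1)
  have hβ₀ : β₀ < κ.ord := by
    obtain ⟨x, hx⟩ := Ultrafilter.nonempty_of_mem hT
    exact hx.2 ▸ (hgspec x hx.1).2.1
  have hIio : {x : ↥(SmallSet κ lam) | ∀ β < β₀, β ∈ (x : Set Ordinal)} ∈ U :=
    aeIio hUc hUf (le_trans (le_of_lt hβ₀) (kord_le_lord hκlam)) (Cardinal.lt_ord.1 hβ₀)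
  obtain ⟨x, hx1, hx2⟩ := Ultrafilter.nonempty_of_mem (Filter.inter_mem hT hIio)
  obtain ⟨α, hα1, hα2⟩ := (hgspec x hx1.1).2.2
  rw [hx1.2] at hα1
  exact hα2 (hx2 α hα1)

lemma Gdc_eq {x : ↥(SmallSet κ lam)} (hx : x ∈ Gdc κ lam) :
    (x : Set Ordinal) ∩ Set.Iio κ.ord = Set.Iio (dlt κ x) := by
  ext β
  constructor
  · rintro ⟨h1, h2⟩
    simp only [mem_Iio]
    by_contra hle
    rcases lt_or_eq_of_le (not_lt.1 hle) with hlt | heq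
    · exact dlt_not_mem x ⟨hx β h1 h2 _ hlt, lt_trans hlt h2⟩
    · exact dlt_not_mem x (heq ▸ ⟨h1, h2⟩)
  · intro hβ
    exact lt_dlt hβ

lemma dlt_card_lt {x : ↥(SmallSet κ lam)} (hx : x ∈ Gdc κ lam) : (dlt κ x).card < κ := by
  have h1 : Set.Iio (dlt κ x) ⊆ (x : Set Ordinal) := by
    rw [← Gdc_eq hx]; exact inter_subset_left
  have h2 : #(Set.Iio (dlt κ x)) ≤ #(x : Set Ordinal) := Cardinal.mk_le_mk_of_subset h1
  rw [Ordinal.mk_Iio_ordinal] at h2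
  have := lt_of_le_of_lt h2 x.2.2
  rwa [Cardinal.lift_lt] at this

lemma dlt_lt_kord {x : ↥(SmallSet κ lam)} (hx : x ∈ Gdc κ lam) : dlt κ x < κ.ord :=
  Cardinal.lt_ord.2 (dlt_card_lt hx)

/-- Projection of `U` to a measure on `κ` via `dlt`. -/
def Dset (κ lam : Cardinal.{0}) (A : Set Ordinal) : Set ↥(SmallSet κ lam) :=
  {x | dlt κ x ∈ A}

lemma D_kord (hG : Gdc κ lam ∈ U) : Dset κ lam (Set.Iio κ.ord) ∈ U :=
  Filter.mem_of_superset hG (fun _ hx => dlt_lt_kord hx)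

lemma D_compl (hG : Gdc κ lam ∈ U) {A : Set Ordinal} (h : Dset κ lam A ∉ U) :
    Dset κ lam (Set.Iio κ.ord \ A) ∈ U := by
  have h1 : (Dset κ lam A)ᶜ ∈ U := (Ultrafilter.compl_mem_iff_notMem).2 h
  refine Filter.mem_of_superset (Filter.inter_mem h1 hG) ?_
  rintro x ⟨hx1, hx2⟩
  exact ⟨dlt_lt_kord hx2, hx1⟩

lemma D_nonpr (hκ : ℵ₀ < κ) (hκlam : κ ≤ lam) (hUf : Fine κ lam U)
    (hG : Gdc κ lam ∈ U) (γ : Ordinal) : Dset κ lam {γ} ∉ U := by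
  intro h
  have hγ : γ < κ.ord := by
    obtain ⟨x, hx1, hx2⟩ := Ultrafilter.nonempty_of_mem (Filter.inter_mem h hG)
    have : dlt κ x = γ := hx1
    exact this ▸ dlt_lt_kord hx2
  have h2 : {x : ↥(SmallSet κ lam) | γ ∈ (x : Set Ordinal)} ∈ U :=
    hUf γ (lt_of_lt_of_le hγ (kord_le_lord hκlam))
  obtain ⟨x, hx1, hx2, hx3⟩ := Ultrafilter.nonempty_of_mem
    (Filter.inter_mem h (Filter.inter_mem hG h2))
  have hd : dlt κ x = γ := hx1
  have : γ ∈ Set.Iio (dlt κ x) := by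
    rw [← Gdc_eq hx2]; exact ⟨hx3, hγ⟩
  rw [hd] at this
  exact lt_irrefl γ this

lemma DG (hκ : ℵ₀ < κ) (hκlam : κ ≤ lam) (hUf : Fine κ lam U)
    (hG : Gdc κ lam ∈ U) {A : Set Ordinal} (hA : Dset κ lam A ∈ U) :
    {x : ↥(SmallSet κ lam) | ∃ β ∈ A, β < dlt κ x} ∈ U := by
  obtain ⟨x₁, hx1, hx2⟩ := Ultrafilter.nonempty_of_mem (Filter.inter_mem hA hG)
  have hβκ : dlt κ x₁ < κ.ord := dlt_lt_kord hx2
  set β := dlt κ x₁ with hβdef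
  have h2 : {x : ↥(SmallSet κ lam) | β ∈ (x : Set Ordinal)} ∈ U :=
    hUf β (lt_of_lt_of_le hβκ (kord_le_lord hκlam))
  refine Filter.mem_of_superset (Filter.inter_mem h2 hG) ?_
  rintro x ⟨h3, h4⟩
  refine ⟨β, hx1, ?_⟩
  have : β ∈ Set.Iio (dlt κ x) := by rw [← Gdc_eq h4]; exact ⟨h3, hβκ⟩
  exact this

lemma DG2 (hκ : ℵ₀ < κ) (hκlam : κ ≤ lam) (hUf : Fine κ lam U)
    (hG : Gdc κ lam ∈ U) {A : Set Ordinal} (hA : Dset κ lam A ∈ U) :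
    {x : ↥(SmallSet κ lam) | ∃ β γ', β ≠ γ' ∧ β ∈ A ∧ β < dlt κ x ∧ γ' ∈ A ∧ γ' < dlt κ x} ∈ U := by
  obtain ⟨x₁, hx1, hx2⟩ := Ultrafilter.nonempty_of_mem (Filter.inter_mem hA hG)
  set β := dlt κ x₁ with hβdef
  have hβκ : β < κ.ord := dlt_lt_kord hx2
  have hβA : β ∈ A := hx1
  have h2 : {x : ↥(SmallSet κ lam) | β ∈ (x : Set Ordinal)} ∈ U :=
    hUf β (lt_of_lt_of_le hβκ (kord_le_lord hκlam))
  have hA' : Dset κ lam (A \ {β}) ∈ U := by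
    have hc : (Dset κ lam {β})ᶜ ∈ U :=
      (Ultrafilter.compl_mem_iff_notMem).2 (D_nonpr hκ hκlam hUf hG β)
    refine Filter.mem_of_superset (Filter.inter_mem hA hc) ?_
    rintro x ⟨g1, g2⟩
    exact ⟨g1, g2⟩
  have h3 := DG hκ hκlam hUf hG hA'
  refine Filter.mem_of_superset (Filter.inter_mem h3 (Filter.inter_mem h2 hG)) ?_
  rintro x ⟨⟨γ', hγ'1, hγ'2⟩, h4, h5⟩
  have hβd : β < dlt κ x := by
    have : β ∈ Set.Iio (dlt κ x) := by rw [← Gdc_eq h5]; exact ⟨h4, hβκ⟩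
    exact this
  exact ⟨γ', β, fun hne => hγ'1.2 (by rw [hne]; rfl), hγ'1.1, hγ'2, hβA, hβd⟩

/-- a.e. `x`, `dlt κ x` is a limit of supercompact cardinals inside `x`. -/
def SCset (κ lam : Cardinal.{0}) : Set ↥(SmallSet κ lam) :=
  {x | ∀ β ∈ (x : Set Ordinal), β < κ.ord → ∃ ρ : Cardinal, IsSupercompactCard ρ ∧
      ρ.ord ∈ (x : Set Ordinal) ∧ β < ρ.ord ∧ ρ.ord < κ.ord}

lemma SC_mem (hκ : ℵ₀ < κ) (hκlam : κ ≤ lam) (hUn : NormalUF κ lam U) (hUf : Fine κ lam U)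
    (hub : ∀ α < κ, ∃ δ : Cardinal.{0}, α < δ ∧ δ < κ ∧ IsSupercompactCard δ) :
    SCset κ lam ∈ U := by
  classical
  by_contra hcon
  have hN : (SCset κ lam)ᶜ ∈ U := (Ultrafilter.compl_mem_iff_notMem).2 hcon
  have hbad : ∀ x ∈ (SCset κ lam)ᶜ, ∃ β, β ∈ (x : Set Ordinal) ∧ β < κ.ord ∧
      ∀ ρ : Cardinal, ¬(IsSupercompactCard ρ ∧ ρ.ord ∈ (x : Set Ordinal) ∧ β < ρ.ord ∧
        ρ.ord < κ.ord) := by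
    intro x hx
    simp only [SCset, mem_compl_iff, mem_setOf_eq] at hx
    push_neg at hx
    obtain ⟨β, h1, h2, h3⟩ := hx
    refine ⟨β, h1, h2, fun ρ hρ => ?_⟩
    exact absurd hρ.2.2.2 (not_lt.2 (h3 ρ hρ.1 hρ.2.1 hρ.2.2.1))
  set g : ↥(SmallSet κ lam) → Ordinal := fun x =>
    if hx : x ∈ (SCset κ lam)ᶜ then (hbad x hx).choose else 0 with hgdef
  have hgspec : ∀ x ∈ (SCset κ lam)ᶜ, g x ∈ (x : Set Ordinal) ∧ g x < κ.ord ∧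
      ∀ ρ : Cardinal, ¬(IsSupercompactCard ρ ∧ ρ.ord ∈ (x : Set Ordinal) ∧ g x < ρ.ord ∧
        ρ.ord < κ.ord) := by
    intro x hx
    simp only [hgdef, dif_pos hx]
    exact (hbad x hx).choose_spec
  obtain ⟨β₀, hT⟩ := press hκ hκlam hUn _ g hN (fun x hx => (hgspec x hx).1)
  have hβ₀κ : β₀ < κ.ord := by
    obtain ⟨x, hx⟩ := Ultrafilter.nonempty_of_mem hT
    exact hx.2 ▸ (hgspec x hx.1).2.1
  obtain ⟨ρ, hρ1, hρ2, hρ3⟩ := hub β₀.card (Cardinal.lt_ord.1 hβ₀κ)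
  have hβρ : β₀ < ρ.ord := Cardinal.lt_ord.2 hρ1
  have hρκ : ρ.ord < κ.ord := Cardinal.ord_lt_ord.2 hρ2
  have h2 : {x : ↥(SmallSet κ lam) | ρ.ord ∈ (x : Set Ordinal)} ∈ U :=
    hUf ρ.ord (lt_of_lt_of_le hρκ (kord_le_lord hκlam))
  obtain ⟨x, hx1, hx2⟩ := Ultrafilter.nonempty_of_mem (Filter.inter_mem hT h2)
  have spec := (hgspec x hx1.1).2.2
  rw [hx1.2] at spec
  exact spec ρ ⟨hρ3, hx2, hβρ, hρκ⟩

/-- With `2^κ = κ⁺ ≤ λ`, subsets of `κ` can be coded by ordinals below `λ`. -/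
lemma exists_code (hlam : Order.succ κ ≤ lam) (hgch : 2 ^ κ = Order.succ κ) :
    ∃ e : Ordinal.{0} → Set Ordinal.{0}, ∀ A : Set Ordinal, A ⊆ Set.Iio κ.ord →
      ∃ γ, γ < lam.ord ∧ e γ = A := by
  classical
  have h1 : #(Set ↥(Set.Iio κ.ord)) ≤ #↥(Set.Iio lam.ord) := by
    rw [Cardinal.mk_set, Ordinal.mk_Iio_ordinal, Ordinal.mk_Iio_ordinal,
      Cardinal.card_ord, Cardinal.card_ord]
    have : (2 : Cardinal.{1}) ^ Cardinal.lift.{1} κ = Cardinal.lift.{1} (2 ^ κ) := by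
      rw [Cardinal.lift_power, Cardinal.lift_two]
    rw [this, hgch]
    exact Cardinal.lift_le.2 hlam
  obtain ⟨f⟩ := (Cardinal.le_def _ _).1 h1
  set g : ↥(Set.Iio lam.ord) → Set ↥(Set.Iio κ.ord) := Function.invFun f with hgdef
  have hgf : Function.LeftInverse g f := Function.leftInverse_invFun f.injective
  refine ⟨fun γ => if h : γ < lam.ord then
    {β | ∃ hb : β < κ.ord, (⟨β, hb⟩ : ↥(Set.Iio κ.ord)) ∈ g ⟨γ, h⟩} else ∅, ?_⟩
  intro A hA
  set s : Set ↥(Set.Iio κ.ord) := {b | (b : Ordinal) ∈ A} with hsdef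
  refine ⟨(f s).1, (f s).2, ?_⟩
  beta_reduce
  rw [dif_pos (show ((f s : ↥(Set.Iio lam.ord)) : Ordinal) < lam.ord from (f s).2)]
  have hfs : (⟨((f s : ↥(Set.Iio lam.ord)) : Ordinal), (f s).2⟩ : ↥(Set.Iio lam.ord)) = f s :=
    rfl
  rw [hfs, hgf s]
  ext β
  simp only [mem_setOf_eq, hsdef]
  constructor
  · rintro ⟨hb, hmem⟩
    exact hmem
  · intro hβ
    exact ⟨hA hβ, hβ⟩

/-- Membership in the reflected filter at `x`. -/
def Wmem (κ : Cardinal.{0}) {lam : Cardinal.{0}} (e : Ordinal → Set Ordinal)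
    (x : ↥(SmallSet κ lam)) (B : Set Ordinal) : Prop :=
  ∃ α ∈ (x : Set Ordinal), dlt κ x ∈ e α ∧ e α ∩ Set.Iio (dlt κ x) ⊆ B

lemma Wmono {e : Ordinal → Set Ordinal} {x : ↥(SmallSet κ lam)} {B B' : Set Ordinal}
    (h : Wmem κ e x B) (hBB : B ⊆ B') : Wmem κ e x B' := by
  obtain ⟨α, h1, h2, h3⟩ := h
  exact ⟨α, h1, h2, h3.trans hBB⟩

/-- Every function `h` with `h x ⊆ Iio (dlt x)` is represented by a subset of `κ`. -/
lemma repr_mem (hκ : ℵ₀ < κ) (hκlam : κ ≤ lam) (hUn : NormalUF κ lam U)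
    (hG : Gdc κ lam ∈ U)
    (h : ↥(SmallSet κ lam) → Set Ordinal) (hsub : ∀ x, h x ⊆ Set.Iio (dlt κ x)) :
    {x : ↥(SmallSet κ lam) |
      h x = {β | β < κ.ord ∧ {y : ↥(SmallSet κ lam) | β ∈ h y} ∈ U} ∩ Set.Iio (dlt κ x)} ∈ U := by
  classical
  set A : Set Ordinal := {β | β < κ.ord ∧ {y : ↥(SmallSet κ lam) | β ∈ h y} ∈ U} with hAdef
  by_contra hcon
  have hN : {x : ↥(SmallSet κ lam) | ¬ h x = A ∩ Set.Iio (dlt κ x)} ∈ U :=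
    (Ultrafilter.compl_mem_iff_notMem).2 hcon
  set N' : Set ↥(SmallSet κ lam) :=
    {x | ¬ h x = A ∩ Set.Iio (dlt κ x)} ∩ Gdc κ lam with hN'def
  have hN' : N' ∈ U := Filter.inter_mem hN hG
  have hdiff : ∀ x ∈ N',
      ((h x \ (A ∩ Set.Iio (dlt κ x))) ∪ ((A ∩ Set.Iio (dlt κ x)) \ h x)).Nonempty := by
    intro x hx
    by_contra hemp
    rw [Set.not_nonempty_iff_eq_empty, Set.union_empty_iff] at hemp
    refine hx.1 (Set.Subset.antisymm ?_ ?_)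
    · intro β hβ
      by_contra hβ2
      exact (Set.eq_empty_iff_forall_notMem.1 hemp.1 β) ⟨hβ, hβ2⟩
    · intro β hβ
      by_contra hβ2
      exact (Set.eq_empty_iff_forall_notMem.1 hemp.2 β) ⟨hβ, hβ2⟩
  set g : ↥(SmallSet κ lam) → Ordinal := fun x =>
    if hx : x ∈ N' then
      sInf ((h x \ (A ∩ Set.Iio (dlt κ x))) ∪ ((A ∩ Set.Iio (dlt κ x)) \ h x)) else 0 with hgdef
  have hgD : ∀ x ∈ N',
      g x ∈ (h x \ (A ∩ Set.Iio (dlt κ x))) ∪ ((A ∩ Set.Iio (dlt κ x)) \ h x) := by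
    intro x hx
    simp only [hgdef, dif_pos hx]
    exact csInf_mem (hdiff x hx)
  have hglt : ∀ x ∈ N', g x < dlt κ x := by
    intro x hx
    rcases hgD x hx with hg | hg
    · exact hsub x hg.1
    · exact hg.1.2
  have hgx : ∀ x ∈ N', g x ∈ (x : Set Ordinal) := by
    intro x hx
    have : g x ∈ Set.Iio (dlt κ x) := hglt x hx
    rw [← Gdc_eq hx.2] at this
    exact this.1
  obtain ⟨γ₀, hT⟩ := press hκ hκlam hUn N' g hN' hgx
  have hTκ : ∀ x, x ∈ {x | x ∈ N' ∧ g x = γ₀} → γ₀ < dlt κ x ∧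
      γ₀ ∈ (h x \ (A ∩ Set.Iio (dlt κ x))) ∪ ((A ∩ Set.Iio (dlt κ x)) \ h x) := by
    rintro x ⟨hx1, hx2⟩
    exact ⟨hx2 ▸ hglt x hx1, hx2 ▸ hgD x hx1⟩
  by_cases hcase : {y : ↥(SmallSet κ lam) | γ₀ ∈ h y} ∈ U
  · have hγA : γ₀ ∈ A := by
      obtain ⟨x, hx⟩ := Ultrafilter.nonempty_of_mem hT
      have h1 := (hTκ x hx).1
      exact ⟨lt_of_lt_of_le h1 (dlt_le x), hcase⟩
    obtain ⟨x, hx1, hx2⟩ := Ultrafilter.nonempty_of_mem (Filter.inter_mem hT hcase)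
    rcases (hTκ x hx1).2 with hg | hg
    · exact hg.2 ⟨hγA, (hTκ x hx1).1⟩
    · exact hg.2 hx2
  · have hcompl : {y : ↥(SmallSet κ lam) | γ₀ ∈ h y}ᶜ ∈ U :=
      (Ultrafilter.compl_mem_iff_notMem).2 hcase
    have hγA : γ₀ ∉ A := fun hA' => hcase hA'.2
    obtain ⟨x, hx1, hx2⟩ := Ultrafilter.nonempty_of_mem (Filter.inter_mem hT hcompl)
    rcases (hTκ x hx1).2 with hg | hg
    · exact hx2 hg.1
    · exact hγA hg.1.1

/-- Traces of `D`-large sets are a.e. in `W`. -/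
lemma trace_mem (hκ : ℵ₀ < κ) (hκlam : κ ≤ lam) (hUf : Fine κ lam U)
    {e : Ordinal → Set Ordinal}
    (hecode : ∀ A : Set Ordinal, A ⊆ Set.Iio κ.ord → ∃ γ, γ < lam.ord ∧ e γ = A)
    {A : Set Ordinal} (hAsub : A ⊆ Set.Iio κ.ord) (hAD : Dset κ lam A ∈ U) :
    {x : ↥(SmallSet κ lam) | Wmem κ e x (A ∩ Set.Iio (dlt κ x))} ∈ U := by
  obtain ⟨γ, hγ1, hγ2⟩ := hecode A hAsub
  refine Filter.mem_of_superset (Filter.inter_mem (hUf γ hγ1) hAD) ?_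
  rintro x ⟨h1, h2⟩
  exact ⟨γ, h1, by rw [hγ2]; exact h2, by rw [hγ2]⟩

/-- a.e. `x`, all traces at `x` are nonempty. -/
def PRset (κ lam : Cardinal.{0}) (e : Ordinal → Set Ordinal) : Set ↥(SmallSet κ lam) :=
  {x | ∀ α ∈ (x : Set Ordinal), dlt κ x ∈ e α → (e α ∩ Set.Iio (dlt κ x)).Nonempty}

lemma PR_mem (hκ : ℵ₀ < κ) (hκlam : κ ≤ lam) (hUn : NormalUF κ lam U) (hUf : Fine κ lam U)
    (hG : Gdc κ lam ∈ U) (e : Ordinal → Set Ordinal) : PRset κ lam e ∈ U := by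
  classical
  by_contra hcon
  have hN : (PRset κ lam e)ᶜ ∈ U := (Ultrafilter.compl_mem_iff_notMem).2 hcon
  have hbad : ∀ x ∈ (PRset κ lam e)ᶜ, ∃ α, α ∈ (x : Set Ordinal) ∧ dlt κ x ∈ e α ∧
      e α ∩ Set.Iio (dlt κ x) = ∅ := by
    intro x hx
    simp only [PRset, mem_compl_iff, mem_setOf_eq] at hx
    push_neg at hx
    obtain ⟨α, h1, h2, h3⟩ := hx
    exact ⟨α, h1, h2, h3⟩
  set g : ↥(SmallSet κ lam) → Ordinal := fun x =>
    if hx : x ∈ (PRset κ lam e)ᶜ then (hbad x hx).choose else 0 with hgdef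
  have hgspec : ∀ x ∈ (PRset κ lam e)ᶜ, g x ∈ (x : Set Ordinal) ∧ dlt κ x ∈ e (g x) ∧
      e (g x) ∩ Set.Iio (dlt κ x) = ∅ := by
    intro x hx
    simp only [hgdef, dif_pos hx]
    exact (hbad x hx).choose_spec
  obtain ⟨α₀, hT⟩ := press hκ hκlam hUn _ g hN (fun x hx => (hgspec x hx).1)
  have hTD : Dset κ lam (e α₀) ∈ U := by
    refine Filter.mem_of_superset hT ?_
    rintro x ⟨hx1, hx2⟩
    exact hx2 ▸ (hgspec x hx1).2.1
  have hDG := DG hκ hκlam hUf hG hTD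
  obtain ⟨x, hx1, β, hβ1, hβ2⟩ := Ultrafilter.nonempty_of_mem (Filter.inter_mem hT hDG)
  have := (hgspec x hx1.1).2.2
  rw [hx1.2] at this
  exact (Set.eq_empty_iff_forall_notMem.1 this β) ⟨hβ1, hβ2⟩

/-- a.e. `x` is closed under any fixed binary ordinal function bounded by `lam.ord`. -/
lemma closure2 (hκ : ℵ₀ < κ) (hκlam : κ ≤ lam) (hUn : NormalUF κ lam U) (hUf : Fine κ lam U)
    (f : Ordinal → Ordinal → Ordinal) (hf : ∀ α α', f α α' < lam.ord) :
    {x : ↥(SmallSet κ lam) | ∀ α ∈ (x : Set Ordinal), ∀ α' ∈ (x : Set Ordinal),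
      f α α' ∈ (x : Set Ordinal)} ∈ U := by
  classical
  set C := {x : ↥(SmallSet κ lam) | ∀ α ∈ (x : Set Ordinal), ∀ α' ∈ (x : Set Ordinal),
      f α α' ∈ (x : Set Ordinal)} with hCdef
  by_contra hcon
  have hN : Cᶜ ∈ U := (Ultrafilter.compl_mem_iff_notMem).2 hcon
  have hbad : ∀ x ∈ Cᶜ, ∃ p : Ordinal × Ordinal, p.1 ∈ (x : Set Ordinal) ∧
      p.2 ∈ (x : Set Ordinal) ∧ f p.1 p.2 ∉ (x : Set Ordinal) := by
    intro x hx
    simp only [hCdef, mem_compl_iff, mem_setOf_eq] at hx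
    push_neg at hx
    obtain ⟨α, h1, α', h2, h3⟩ := hx
    exact ⟨⟨α, α'⟩, h1, h2, h3⟩
  set p : ↥(SmallSet κ lam) → Ordinal × Ordinal := fun x =>
    if hx : x ∈ Cᶜ then (hbad x hx).choose else ⟨0, 0⟩ with hpdef
  have hpspec : ∀ x ∈ Cᶜ, (p x).1 ∈ (x : Set Ordinal) ∧ (p x).2 ∈ (x : Set Ordinal) ∧
      f (p x).1 (p x).2 ∉ (x : Set Ordinal) := by
    intro x hx
    simp only [hpdef, dif_pos hx]
    exact (hbad x hx).choose_spec
  obtain ⟨α₀, hT1⟩ := press hκ hκlam hUn _ (fun x => (p x).1) hN (fun x hx => (hpspec x hx).1)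
  obtain ⟨β₀, hT2⟩ := press hκ hκlam hUn _ (fun x => (p x).2) hT1
    (fun x hx => (hpspec x hx.1).2.1)
  obtain ⟨x, hx1, hx2⟩ := Ultrafilter.nonempty_of_mem
    (Filter.inter_mem hT2 (hUf (f α₀ β₀) (hf α₀ β₀)))
  have hspec := (hpspec x hx1.1.1).2.2
  rw [hx1.1.2, hx1.2] at hspec
  exact hspec hx2

/-- Two sets in `W x` have intersecting traces. -/
lemma W_consistent {e : Ordinal → Set Ordinal} (f : Ordinal → Ordinal → Ordinal)
    (hfe : ∀ α α', e (f α α') = e α ∩ e α' ∩ Set.Iio κ.ord)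
    {x : ↥(SmallSet κ lam)}
    (hxCL : ∀ α ∈ (x : Set Ordinal), ∀ α' ∈ (x : Set Ordinal), f α α' ∈ (x : Set Ordinal))
    (hxPR : x ∈ PRset κ lam e) (hxG : x ∈ Gdc κ lam)
    {B B' : Set Ordinal} (h1 : Wmem κ e x B) (h2 : Wmem κ e x B') :
    (B ∩ B' ∩ Set.Iio (dlt κ x)).Nonempty := by
  obtain ⟨α, ha1, ha2, ha3⟩ := h1
  obtain ⟨α', hb1, hb2, hb3⟩ := h2
  have hmem : f α α' ∈ (x : Set Ordinal) := hxCL α ha1 α' hb1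
  have hdm : dlt κ x ∈ e (f α α') := by
    rw [hfe]
    exact ⟨⟨ha2, hb2⟩, dlt_lt_kord hxG⟩
  obtain ⟨β, hβ⟩ := hxPR (f α α') hmem hdm
  rw [hfe] at hβ
  refine ⟨β, ⟨⟨?_, ?_⟩, hβ.2⟩⟩
  · exact ha3 ⟨hβ.1.1.1, hβ.2⟩
  · exact hb3 ⟨hβ.1.1.2, hβ.2⟩

/-- a.e. `x`, `W x` decides every subset of `Iio (dlt x)`. -/
lemma DEC_mem (hκ : ℵ₀ < κ) (hκlam : κ ≤ lam) (hUn : NormalUF κ lam U) (hUf : Fine κ lam U)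
    (hG : Gdc κ lam ∈ U) {e : Ordinal → Set Ordinal}
    (hecode : ∀ A : Set Ordinal, A ⊆ Set.Iio κ.ord → ∃ γ, γ < lam.ord ∧ e γ = A) :
    {x : ↥(SmallSet κ lam) | ∀ B ⊆ Set.Iio (dlt κ x),
      Wmem κ e x B ∨ Wmem κ e x (Set.Iio (dlt κ x) \ B)} ∈ U := by
  classical
  set DEC := {x : ↥(SmallSet κ lam) | ∀ B ⊆ Set.Iio (dlt κ x),
      Wmem κ e x B ∨ Wmem κ e x (Set.Iio (dlt κ x) \ B)} with hDECdef
  by_contra hcon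
  have hN : DECᶜ ∈ U := (Ultrafilter.compl_mem_iff_notMem).2 hcon
  have hbad : ∀ x ∈ DECᶜ, ∃ B : Set Ordinal, B ⊆ Set.Iio (dlt κ x) ∧
      ¬ Wmem κ e x B ∧ ¬ Wmem κ e x (Set.Iio (dlt κ x) \ B) := by
    intro x hx
    simp only [hDECdef, mem_compl_iff, mem_setOf_eq] at hx
    push_neg at hx
    obtain ⟨B, h1, h2, h3⟩ := hx
    exact ⟨B, h1, h2, h3⟩
  set h : ↥(SmallSet κ lam) → Set Ordinal := fun x =>
    if hx : x ∈ DECᶜ then (hbad x hx).choose else ∅ with hhdef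
  have hspec : ∀ x ∈ DECᶜ, h x ⊆ Set.Iio (dlt κ x) ∧
      ¬ Wmem κ e x (h x) ∧ ¬ Wmem κ e x (Set.Iio (dlt κ x) \ h x) := by
    intro x hx
    simp only [hhdef, dif_pos hx]
    exact (hbad x hx).choose_spec
  have hsub : ∀ x, h x ⊆ Set.Iio (dlt κ x) := by
    intro x
    by_cases hx : x ∈ DECᶜ
    · exact (hspec x hx).1
    · simp only [hhdef, dif_neg hx]
      exact empty_subset _
  set A : Set Ordinal := {β | β < κ.ord ∧ {y : ↥(SmallSet κ lam) | β ∈ h y} ∈ U} with hAdef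
  have hEQ := repr_mem hκ hκlam hUn hG h hsub
  have hAsub : A ⊆ Set.Iio κ.ord := fun β hβ => hβ.1
  by_cases hcase : Dset κ lam A ∈ U
  · have hW := trace_mem hκ hκlam hUf hecode hAsub hcase
    obtain ⟨x, hx1, hx2, hx3⟩ := Ultrafilter.nonempty_of_mem
      (Filter.inter_mem hN (Filter.inter_mem hEQ hW))
    refine (hspec x hx1).2.1 ?_
    have hx2' : h x = A ∩ Set.Iio (dlt κ x) := hx2
    rw [hx2']
    exact hx3
  · have hcompl := D_compl hG hcase
    have hW := trace_mem hκ hκlam hUf hecode (diff_subset) hcompl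
    obtain ⟨x, hx1, hx2, hx3⟩ := Ultrafilter.nonempty_of_mem
      (Filter.inter_mem hN (Filter.inter_mem hEQ hW))
    refine (hspec x hx1).2.2 ?_
    have hx2' : h x = A ∩ Set.Iio (dlt κ x) := hx2
    have heq : (Set.Iio κ.ord \ A) ∩ Set.Iio (dlt κ x) = Set.Iio (dlt κ x) \ h x := by
      rw [hx2']
      ext β
      constructor
      · rintro ⟨⟨hb1, hb2⟩, hb3⟩
        exact ⟨hb3, fun hb4 => hb2 hb4.1⟩
      · rintro ⟨hb1, hb2⟩
        refine ⟨⟨lt_of_lt_of_le hb1 (dlt_le x), fun hb3 => hb2 ⟨hb3, hb1⟩⟩, hb1⟩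
    have hx3' : Wmem κ e x ((Set.Iio κ.ord \ A) ∩ Set.Iio (dlt κ x)) := hx3
    rw [heq] at hx3'
    exact hx3' 

/-- a.e. `x`, `W x` contains no singleton. -/
lemma NPR_mem (hκ : ℵ₀ < κ) (hκlam : κ ≤ lam) (hUn : NormalUF κ lam U) (hUf : Fine κ lam U)
    (hG : Gdc κ lam ∈ U) (e : Ordinal → Set Ordinal) :
    {x : ↥(SmallSet κ lam) | ∀ γ : Ordinal, ¬ Wmem κ e x {γ}} ∈ U := by
  classical
  set NP := {x : ↥(SmallSet κ lam) | ∀ γ : Ordinal, ¬ Wmem κ e x {γ}} with hNPdef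
  by_contra hcon
  have hN : NPᶜ ∈ U := (Ultrafilter.compl_mem_iff_notMem).2 hcon
  have hbad : ∀ x ∈ NPᶜ, ∃ p : Ordinal × Ordinal, p.2 ∈ (x : Set Ordinal) ∧
      dlt κ x ∈ e p.2 ∧ e p.2 ∩ Set.Iio (dlt κ x) ⊆ {p.1} := by
    intro x hx
    simp only [hNPdef, mem_compl_iff, mem_setOf_eq, not_forall, not_not] at hx
    obtain ⟨γ, α, h1, h2, h3⟩ := hx
    exact ⟨⟨γ, α⟩, h1, h2, h3⟩
  set p : ↥(SmallSet κ lam) → Ordinal × Ordinal := fun x =>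
    if hx : x ∈ NPᶜ then (hbad x hx).choose else ⟨0, 0⟩ with hpdef
  have hpspec : ∀ x ∈ NPᶜ, (p x).2 ∈ (x : Set Ordinal) ∧ dlt κ x ∈ e (p x).2 ∧
      e (p x).2 ∩ Set.Iio (dlt κ x) ⊆ {(p x).1} := by
    intro x hx
    simp only [hpdef, dif_pos hx]
    exact (hbad x hx).choose_spec
  obtain ⟨α₀, hT⟩ := press hκ hκlam hUn _ (fun x => (p x).2) hN (fun x hx => (hpspec x hx).1)
  have hTD : Dset κ lam (e α₀) ∈ U := by
    refine Filter.mem_of_superset hT ?_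
    rintro x ⟨hx1, hx2⟩
    exact hx2 ▸ (hpspec x hx1).2.1
  have h2 := DG2 hκ hκlam hUf hG hTD
  obtain ⟨x, hx1, β, γ', hd, hb1, hb2, hc1, hc2⟩ :=
    Ultrafilter.nonempty_of_mem (Filter.inter_mem hT h2)
  have hsub := (hpspec x hx1.1).2.2
  rw [hx1.2] at hsub
  have e1 : β = (p x).1 := hsub ⟨hb1, hb2⟩
  have e2 : γ' = (p x).1 := hsub ⟨hc1, hc2⟩
  exact hd (e1.trans e2.symm)

/-- a.e. `x`, `W x` is `dlt x`-complete. -/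
lemma CMP_mem (hκ : ℵ₀ < κ) (hκlam : κ ≤ lam) (hUc : KComplete κ U)
    (hUn : NormalUF κ lam U) (hUf : Fine κ lam U) (hG : Gdc κ lam ∈ U)
    {e : Ordinal → Set Ordinal}
    (hecode : ∀ A : Set Ordinal, A ⊆ Set.Iio κ.ord → ∃ γ, γ < lam.ord ∧ e γ = A)
    (f : Ordinal → Ordinal → Ordinal) (hflt : ∀ α α', f α α' < lam.ord)
    (hfe : ∀ α α', e (f α α') = e α ∩ e α' ∩ Set.Iio κ.ord) :
    {x : ↥(SmallSet κ lam) | ∀ (o : Ordinal) (b : Ordinal → Set Ordinal), o < dlt κ x →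
      (∀ i < o, Wmem κ e x (b i) ∧ b i ⊆ Set.Iio (dlt κ x)) →
      Wmem κ e x (Set.Iio (dlt κ x) ∩ {β | ∀ i < o, β ∈ b i})} ∈ U := by
  classical
  set CMP := {x : ↥(SmallSet κ lam) | ∀ (o : Ordinal) (b : Ordinal → Set Ordinal),
      o < dlt κ x →
      (∀ i < o, Wmem κ e x (b i) ∧ b i ⊆ Set.Iio (dlt κ x)) →
      Wmem κ e x (Set.Iio (dlt κ x) ∩ {β | ∀ i < o, β ∈ b i})} with hCMPdef
  by_contra hcon
  have hN : CMPᶜ ∈ U := (Ultrafilter.compl_mem_iff_notMem).2 hcon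
  set N' : Set ↥(SmallSet κ lam) := CMPᶜ ∩ Gdc κ lam with hN'def
  have hN' : N' ∈ U := Filter.inter_mem hN hG
  have hbad : ∀ x ∈ N', ∃ p : Ordinal × (Ordinal → Set Ordinal), p.1 < dlt κ x ∧
      (∀ i < p.1, Wmem κ e x (p.2 i) ∧ p.2 i ⊆ Set.Iio (dlt κ x)) ∧
      ¬ Wmem κ e x (Set.Iio (dlt κ x) ∩ {β | ∀ i < p.1, β ∈ p.2 i}) := by
    intro x hx
    have hx1 : x ∈ CMPᶜ := hx.1
    simp only [hCMPdef, mem_compl_iff, mem_setOf_eq] at hx1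
    push_neg at hx1
    obtain ⟨o, b, h1, h2, h3⟩ := hx1
    exact ⟨⟨o, b⟩, h1, h2, h3⟩
  set p : ↥(SmallSet κ lam) → Ordinal × (Ordinal → Set Ordinal) := fun x =>
    if hx : x ∈ N' then (hbad x hx).choose else ⟨0, fun _ => ∅⟩ with hpdef
  have hpspec : ∀ x ∈ N', (p x).1 < dlt κ x ∧
      (∀ i < (p x).1, Wmem κ e x ((p x).2 i) ∧ (p x).2 i ⊆ Set.Iio (dlt κ x)) ∧
      ¬ Wmem κ e x (Set.Iio (dlt κ x) ∩ {β | ∀ i < (p x).1, β ∈ (p x).2 i}) := by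
    intro x hx
    simp only [hpdef, dif_pos hx]
    exact (hbad x hx).choose_spec
  have hpx : ∀ x ∈ N', (p x).1 ∈ (x : Set Ordinal) := by
    intro x hx
    have h1 : (p x).1 ∈ Set.Iio (dlt κ x) := (hpspec x hx).1
    rw [← Gdc_eq hx.2] at h1
    exact h1.1
  obtain ⟨o₀, hT⟩ := press hκ hκlam hUn N' (fun x => (p x).1) hN' hpx
  set T := {x | x ∈ N' ∧ (p x).1 = o₀} with hTdef
  have ho₀κ : o₀.card < κ := by
    obtain ⟨x, hx⟩ := Ultrafilter.nonempty_of_mem hT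
    have := lt_trans (hx.2 ▸ (hpspec x hx.1).1) (dlt_lt_kord hx.1.2)
    exact Cardinal.lt_ord.1 this
  set bfun : Ordinal → ↥(SmallSet κ lam) → Set Ordinal := fun i x =>
    if hx : x ∈ T then ((p x).2 i) ∩ Set.Iio (dlt κ x) else ∅ with hbfundef
  have hbsub : ∀ i x, bfun i x ⊆ Set.Iio (dlt κ x) := by
    intro i x
    by_cases hx : x ∈ T
    · simp only [hbfundef, dif_pos hx]
      exact inter_subset_right
    · simp only [hbfundef, dif_neg hx]
      exact empty_subset _
  have hbeq : ∀ x ∈ T, ∀ i < o₀, bfun i x = (p x).2 i := by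
    intro x hx i hi
    have hio : i < (p x).1 := hx.2 ▸ hi
    have := ((hpspec x hx.1).2.1 i hio).2
    simp only [hbfundef, dif_pos hx]
    exact Set.inter_eq_left.2 this
  set A_ : Ordinal → Set Ordinal := fun i =>
    {β | β < κ.ord ∧ {y : ↥(SmallSet κ lam) | β ∈ bfun i y} ∈ U} with hAdef
  have hEQ : ∀ i, {x : ↥(SmallSet κ lam) | bfun i x = A_ i ∩ Set.Iio (dlt κ x)} ∈ U :=
    fun i => repr_mem hκ hκlam hUn hG (bfun i) (hbsub i)
  have hWb : ∀ x ∈ T, ∀ i < o₀, Wmem κ e x (bfun i x) := by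
    intro x hx i hi
    rw [hbeq x hx i hi]
    exact ((hpspec x hx.1).2.1 i (hx.2 ▸ hi)).1
  have hDi : ∀ i < o₀, Dset κ lam (A_ i) ∈ U := by
    intro i hi
    by_contra hni
    have hc := D_compl hG hni
    have hWc := trace_mem hκ hκlam hUf hecode (diff_subset) hc
    have hCL := closure2 hκ hκlam hUn hUf f hflt
    have hPR := PR_mem hκ hκlam hUn hUf hG e
    obtain ⟨x, hxT, hxEQ, hxWc, hxCL, hxPR⟩ := Ultrafilter.nonempty_of_mem
      (Filter.inter_mem hT (Filter.inter_mem (hEQ i)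
        (Filter.inter_mem hWc (Filter.inter_mem hCL hPR))))
    have hW1 : Wmem κ e x (A_ i ∩ Set.Iio (dlt κ x)) := by
      have h1 := hWb x hxT i hi
      have h2 : bfun i x = A_ i ∩ Set.Iio (dlt κ x) := hxEQ
      rwa [h2] at h1
    have hW2 : Wmem κ e x ((Set.Iio κ.ord \ A_ i) ∩ Set.Iio (dlt κ x)) := hxWc
    obtain ⟨β, hβ⟩ := W_consistent f hfe hxCL hxPR hxT.1.2 hW1 hW2
    exact hβ.1.2.1.2 hβ.1.1.1
  set Ainf : Set Ordinal := {β | β < κ.ord ∧ ∀ i < o₀, β ∈ A_ i} with hAinfdef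
  have hDinf : Dset κ lam Ainf ∈ U := by
    have hall : {x : ↥(SmallSet κ lam) | ∀ i < o₀, x ∈ Dset κ lam (A_ i)} ∈ U :=
      comp_iInter hUc o₀ ho₀κ _ hDi
    refine Filter.mem_of_superset (Filter.inter_mem hall hG) ?_
    rintro x ⟨hx1, hx2⟩
    exact ⟨dlt_lt_kord hx2, fun i hi => hx1 i hi⟩
  have hWinf := trace_mem hκ hκlam hUf hecode
    (show Ainf ⊆ Set.Iio κ.ord from fun β hβ => hβ.1) hDinf
  have hEQall : {x : ↥(SmallSet κ lam) |
      ∀ i < o₀, x ∈ {y : ↥(SmallSet κ lam) | bfun i y = A_ i ∩ Set.Iio (dlt κ y)}} ∈ U :=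
    comp_iInter hUc o₀ ho₀κ _ (fun i _ => hEQ i)
  obtain ⟨x, hxT, hxWinf, hxEQall⟩ := Ultrafilter.nonempty_of_mem
    (Filter.inter_mem hT (Filter.inter_mem hWinf hEQall))
  have hfinal : Wmem κ e x (Set.Iio (dlt κ x) ∩ {β | ∀ i < (p x).1, β ∈ (p x).2 i}) := by
    refine Wmono (hxWinf : Wmem κ e x (Ainf ∩ Set.Iio (dlt κ x))) ?_
    rintro β ⟨⟨hβ1, hβ2⟩, hβ3⟩
    refine ⟨hβ3, fun i hi => ?_⟩
    have hio : i < o₀ := hxT.2 ▸ hi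
    have h1 : β ∈ A_ i ∩ Set.Iio (dlt κ x) := ⟨hβ2 i hio, hβ3⟩
    have h2 : bfun i x = A_ i ∩ Set.Iio (dlt κ x) := hxEQall i hio
    rw [← h2] at h1
    rw [← hbeq x hxT i hio]
    exact h1
  exact (hpspec x hxT.1).2.2 hfinal

end Aux

/-- Main reflection lemma: if `κ` is `λ`-supercompact with `κ⁺ = 2^κ ≤ λ` and supercompacts
are unbounded below `κ`, then some `d < κ` is a measurable limit of supercompacts. -/
lemma aux_reflect (κ lam : Cardinal.{0}) (hκ : ℵ₀ < κ)
    (hub : ∀ α < κ, ∃ δ : Cardinal.{0}, α < δ ∧ δ < κ ∧ IsSupercompactCard δ)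
    (hlam : Order.succ κ ≤ lam) (hgch : 2 ^ κ = Order.succ κ)
    (hsc : IsSupercompactTo κ lam) :
    ∃ d : Cardinal.{0}, d < κ ∧ IsMeasurableCard d ∧
      ∀ α < d, ∃ ρ : Cardinal.{0}, α < ρ ∧ ρ < d ∧ IsSupercompactCard ρ := by
  classical
  have hκlam : κ ≤ lam := le_trans (le_of_lt (Order.lt_succ κ)) hlam
  obtain ⟨U, hUc, hUn, hUf⟩ := hsc
  have hG : Gdc κ lam ∈ U := Gdc_mem hκ hκlam hUc hUn hUf
  obtain ⟨e, hecode⟩ := exists_code hlam hgch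
  set f : Ordinal → Ordinal → Ordinal := fun α α' =>
    (hecode (e α ∩ e α' ∩ Set.Iio κ.ord) inter_subset_right).choose with hfdef
  have hflt : ∀ α α', f α α' < lam.ord := fun α α' =>
    (hecode (e α ∩ e α' ∩ Set.Iio κ.ord) inter_subset_right).choose_spec.1
  have hfe : ∀ α α', e (f α α') = e α ∩ e α' ∩ Set.Iio κ.ord := fun α α' =>
    (hecode (e α ∩ e α' ∩ Set.Iio κ.ord) inter_subset_right).choose_spec.2
  have hωκ : (Ordinal.omega0 : Ordinal) < κ.ord := by
    rw [← Cardinal.ord_aleph0]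
    exact Cardinal.ord_lt_ord.2 hκ
  have hω : {x : ↥(SmallSet κ lam) | (Ordinal.omega0 : Ordinal) ∈ (x : Set Ordinal)} ∈ U :=
    hUf _ (lt_of_lt_of_le hωκ (kord_le_lord hκlam))
  have hSC := SC_mem hκ hκlam hUn hUf hub
  have hCL := closure2 hκ hκlam hUn hUf f hflt
  have hPR := PR_mem hκ hκlam hUn hUf hG e
  have hDEC := DEC_mem hκ hκlam hUn hUf hG hecode
  have hNPR := NPR_mem hκ hκlam hUn hUf hG e
  have hCMP := CMP_mem hκ hκlam hUc hUn hUf hG hecode f hflt hfe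
  have hUNIV : {x : ↥(SmallSet κ lam) | Wmem κ e x (Set.Iio (dlt κ x))} ∈ U := by
    have h1 := trace_mem hκ hκlam hUf hecode (subset_rfl (a := Set.Iio κ.ord)) (D_kord hG)
    refine Filter.mem_of_superset h1 ?_
    intro x hx
    exact Wmono hx inter_subset_right
  obtain ⟨x₀, hxG, hxSC, hxω, hxCL, hxPR, hxDEC, hxNPR, hxCMP, hxUNIV⟩ :=
    Ultrafilter.nonempty_of_mem (Filter.inter_mem hG (Filter.inter_mem hSC
      (Filter.inter_mem hω (Filter.inter_mem hCL (Filter.inter_mem hPR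
        (Filter.inter_mem hDEC (Filter.inter_mem hNPR
          (Filter.inter_mem hCMP hUNIV))))))))
  set δ₀ : Ordinal := dlt κ x₀ with hδ₀def
  have hδκ : δ₀ < κ.ord := dlt_lt_kord hxG
  have hlimSC : ∀ β < δ₀, ∃ ρ : Cardinal, IsSupercompactCard ρ ∧ β < ρ.ord ∧ ρ.ord < δ₀ := by
    intro β hβ
    obtain ⟨hβx, hβκ⟩ := lt_dlt hβ
    obtain ⟨ρ, h1, h2, h3, h4⟩ := hxSC β hβx hβκ
    refine ⟨ρ, h1, h3, ?_⟩
    have : ρ.ord ∈ Set.Iio δ₀ := by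
      rw [hδ₀def, ← Gdc_eq hxG]
      exact ⟨h2, h4⟩
    exact this
  have hωδ : (Ordinal.omega0 : Ordinal) < δ₀ := by
    have : (Ordinal.omega0 : Ordinal) ∈ Set.Iio δ₀ := by
      rw [hδ₀def, ← Gdc_eq hxG]
      exact ⟨hxω, hωκ⟩
    exact this
  set d : Cardinal := δ₀.card with hddef
  have hinit : d.ord = δ₀ := by
    rcases lt_or_eq_of_le (Cardinal.ord_card_le δ₀) with hlt | heq
    · exfalso
      obtain ⟨ρ, h1, h2, h3⟩ := hlimSC d.ord hlt
      have hρd : ρ ≤ d := by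
        have := Ordinal.card_le_card (le_of_lt h3)
        rwa [Cardinal.card_ord] at this
      have hdρ : d < ρ := Cardinal.ord_lt_ord.1 h2
      exact absurd hρd (not_le.2 hdρ)
    · exact heq
  have hdκ : d < κ := dlt_card_lt hxG
  have hℵ₀d : ℵ₀ < d := by
    obtain ⟨ρ, h1, h2, h3⟩ := hlimSC _ hωδ
    have hℵρ : ℵ₀ < ρ := by
      rw [← Cardinal.ord_lt_ord, Cardinal.ord_aleph0]
      exact h2
    have hρd : ρ < d := by
      rw [← Cardinal.ord_lt_ord, hinit]
      exact h3
    exact lt_trans hℵρ hρd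
  have hlimd : ∀ α < d, ∃ ρ : Cardinal.{0}, α < ρ ∧ ρ < d ∧ IsSupercompactCard ρ := by
    intro α hα
    have : α.ord < δ₀ := by
      rw [← hinit]
      exact Cardinal.ord_lt_ord.2 hα
    obtain ⟨ρ, h1, h2, h3⟩ := hlimSC α.ord this
    refine ⟨ρ, ?_, ?_, h1⟩
    · rw [← Cardinal.ord_lt_ord]
      exact h2
    · rw [← Cardinal.ord_lt_ord, hinit]
      exact h3
  -- the reflected ultrafilter witnessing measurability of d
  have hWinter : ∀ B B', Wmem κ e x₀ B → Wmem κ e x₀ B' → Wmem κ e x₀ (B ∩ B') := by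
    intro B B' h1 h2
    obtain ⟨α, ha1, ha2, ha3⟩ := h1
    obtain ⟨α', hb1, hb2, hb3⟩ := h2
    refine ⟨f α α', hxCL α ha1 α' hb1, ?_, ?_⟩
    · rw [hfe]
      exact ⟨⟨ha2, hb2⟩, hδκ⟩
    · intro β hβ
      rw [hfe] at hβ
      exact ⟨ha3 ⟨hβ.1.1.1, hβ.2⟩, hb3 ⟨hβ.1.1.2, hβ.2⟩⟩
  have hWproper : ¬ Wmem κ e x₀ ∅ := by
    rintro ⟨α, h1, h2, h3⟩
    obtain ⟨β, hβ⟩ := hxPR α h1 h2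
    exact h3 hβ
  set F : Filter ↥(Set.Iio δ₀) :=
    { sets := {s | Wmem κ e x₀ (Subtype.val '' s)}
      univ_sets := by
        have : (Subtype.val '' (Set.univ : Set ↥(Set.Iio δ₀))) = Set.Iio δ₀ :=
          Subtype.coe_image_univ _
        simp only [mem_setOf_eq, this]
        exact hxUNIV
      sets_of_superset := by
        intro s t hs hst
        exact Wmono hs (Set.image_mono hst)
      inter_sets := by
        intro s t hs ht
        simp only [mem_setOf_eq] at hs ht ⊢
        rw [Set.image_inter Subtype.val_injective]
        exact hWinter _ _ hs ht } with hFdef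
  have himgsub : ∀ s : Set ↥(Set.Iio δ₀), Subtype.val '' s ⊆ Set.Iio δ₀ := by
    rintro s β ⟨b, hb, rfl⟩
    exact b.2
  have himgcompl : ∀ s : Set ↥(Set.Iio δ₀),
      Set.Iio δ₀ \ Subtype.val '' s = Subtype.val '' sᶜ := by
    intro s
    ext β
    constructor
    · rintro ⟨hβ1, hβ2⟩
      refine ⟨⟨β, hβ1⟩, fun hmem => hβ2 ⟨⟨β, hβ1⟩, hmem, rfl⟩, rfl⟩
    · rintro ⟨b, hb, rfl⟩
      refine ⟨b.2, fun hmem => ?_⟩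
      obtain ⟨b', hb', hb'e⟩ := hmem
      exact hb (Subtype.ext hb'e ▸ hb')
  have hFcompl : ∀ s : Set ↥(Set.Iio δ₀), sᶜ ∉ F ↔ s ∈ F := by
    intro s
    constructor
    · intro hns
      rcases hxDEC (Subtype.val '' s) (himgsub s) with h | h
      · exact h
      · exfalso
        refine hns ?_
        show Wmem κ e x₀ (Subtype.val '' sᶜ)
        rw [← himgcompl]
        exact h
    · intro hs hns
      have h1 : Wmem κ e x₀ ((Subtype.val '' s) ∩ (Subtype.val '' sᶜ)) :=
        hWinter _ _ hs hns
      have h2 : (Subtype.val '' s) ∩ (Subtype.val '' sᶜ) = ∅ := by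
        rw [← Set.image_inter Subtype.val_injective, Set.inter_compl_self, Set.image_empty]
      rw [h2] at h1
      exact hWproper h1
  set V : Ultrafilter ↥(Set.Iio δ₀) := Ultrafilter.ofComplNotMemIff F hFcompl with hVdef
  have hVmem : ∀ s : Set ↥(Set.Iio δ₀), s ∈ V ↔ Wmem κ e x₀ (Subtype.val '' s) :=
    fun s => Iff.rfl
  have hVnp : Nonprincipal V := by
    intro a ha
    rw [hVmem, Set.image_singleton] at ha
    exact hxNPR _ ha
  have hVc : KComplete d V := by
    intro ι A hι hA
    rcases isEmpty_or_nonempty ι with hemp | hne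
    · have : (⋂ i, A i) = Set.univ := by
        simp [Set.iInter_of_empty]
      rw [this]
      exact Filter.univ_mem
    · set o : Ordinal := (#ι).ord with hodef
      have hoδ : o < δ₀ := by
        rw [← hinit]
        exact Cardinal.ord_lt_ord.2 hι
      have heqv : Nonempty (ι ≃ o.ToType) := by
        rw [← Cardinal.eq, Cardinal.mk_toType, hodef, Cardinal.card_ord]
      obtain ⟨eqv⟩ := heqv
      set enum := (Ordinal.ToType.mk (o := o)) with henumdef
      set b : Ordinal → Set Ordinal := fun i =>
        if h : i < o then Subtype.val '' (A (eqv.symm (enum ⟨i, h⟩))) else ∅ with hbdef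
      have hball : ∀ i < o, Wmem κ e x₀ (b i) ∧ b i ⊆ Set.Iio δ₀ := by
        intro i hi
        constructor
        · simp only [hbdef, dif_pos hi]
          exact (hVmem _).1 (hA _)
        · simp only [hbdef, dif_pos hi]
          exact himgsub _
      have hWt := hxCMP o b hoδ hball
      rw [hVmem]
      refine Wmono hWt ?_
      rintro β ⟨hβ1, hβ2⟩
      refine ⟨⟨β, hβ1⟩, ?_, rfl⟩
      rw [Set.mem_iInter]
      intro j
      set i : Ordinal := ((enum.symm (eqv j)) : ↥(Set.Iio o)).1 with hidef
      have hio : i < o := (enum.symm (eqv j)).2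
      have hβb := hβ2 i hio
      simp only [hbdef, dif_pos hio] at hβb
      have hj : eqv.symm (enum ⟨i, hio⟩) = j := by
        have : (⟨i, hio⟩ : ↥(Set.Iio o)) = enum.symm (eqv j) := rfl
        rw [this]
        simp
      rw [hj] at hβb
      obtain ⟨b', hb', hb'e⟩ := hβb
      have : b' = ⟨β, hβ1⟩ := Subtype.ext hb'e
      rwa [this] at hb'
  refine ⟨d, hdκ, ⟨hℵ₀d, ?_⟩, hlimd⟩
  rw [hinit]
  exact ⟨V, hVc, hVnp⟩

/-- If κ is the least measurable limit of supercompact cardinals and 2^κ = κ⁺,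
then κ is strongly compact, not κ⁺-supercompact, not λ-supercompact for any
λ ≥ κ⁺, and in particular not supercompact. -/
theorem least_measurable_limit_nonsupercompact_strongly_compact
    (κ : Cardinal.{0}) (hmeas : IsMeasurableCard κ)
    (hub : ∀ α < κ, ∃ δ : Cardinal.{0}, α < δ ∧ δ < κ ∧ IsSupercompactCard δ)
    (hleast : ∀ δ : Cardinal.{0}, δ < κ →
      ¬ (IsMeasurableCard δ ∧
          ∀ α < δ, ∃ ρ : Cardinal.{0}, α < ρ ∧ ρ < δ ∧ IsSupercompactCard ρ))
    (hgch : 2 ^ κ = Order.succ κ) :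
    IsStronglyCompactCard κ ∧
    ¬ IsSupercompactTo κ (Order.succ κ) ∧
    (∀ lam : Cardinal.{0}, Order.succ κ ≤ lam → ¬ IsSupercompactTo κ lam) ∧
    ¬ IsSupercompactCard κ := by
  have hκ : ℵ₀ < κ := hmeas.1
  have hnot : ∀ lam : Cardinal.{0}, Order.succ κ ≤ lam → ¬ IsSupercompactTo κ lam := by
    intro lam hl hsc
    obtain ⟨d, h1, h2, h3⟩ := aux_reflect κ lam hκ hub hl hgch hsc
    exact hleast d h1 ⟨h2, h3⟩
  refine ⟨part1 κ hmeas hub, hnot _ le_rfl, hnot, ?_⟩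
  intro hS
  exact hnot _ le_rfl (hS _ (le_of_lt (Order.lt_succ κ)))
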